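/- arXiv:2209.12225 — 2 statements merged into one kernel-verified Lean document; each statement's English description precedes it below -/
import Mathlib

section
/- Let A, B, Q̃ = CᵀQC, R be as in the LQR setting, with P_k = P_kᵀ ≻ 0 solving the policy-evaluation Lyapunov equation P_k(A − BK_{k−1}) + (A − BK_{k−1})ᵀP_k + Q̃ + K_{k−1}ᵀ R K_{k−1} = 0, and define the improved gain K_k = R⁻¹BᵀP_k. Then for any matrix K, P_k(A−BK)+(A−BK)ᵀP_k = −Q̃ − KᵀRK + (K−K_k)ᵀR(K−K_k) − (K_{k−1}−K_k)ᵀR(K_{k−1}−K_k). -/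
open Matrix

/-- Completion-of-squares identity underlying Kleinman's policy iteration. -/
theorem stmt_8 {n m : ℕ}
    (A : Matrix (Fin n) (Fin n) ℝ) (B : Matrix (Fin n) (Fin m) ℝ)
    (Qt : Matrix (Fin n) (Fin n) ℝ) (R : Matrix (Fin m) (Fin m) ℝ)
    (hQt : Qt.PosSemidef) (hR : R.PosDef)
    (Kprev : Matrix (Fin m) (Fin n) ℝ)
    (Pk : Matrix (Fin n) (Fin n) ℝ) (hPk : Pk.PosDef)
    (hlyap : Pk * (A - B * Kprev) + (A - B * Kprev)ᵀ * Pk + Qt + Kprevᵀ * R * Kprev = 0)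
    (Kk : Matrix (Fin m) (Fin n) ℝ) (hKk : Kk = R⁻¹ * Bᵀ * Pk) :
    ∀ K : Matrix (Fin m) (Fin n) ℝ,
      Pk * (A - B * K) + (A - B * K)ᵀ * Pk =
        -Qt - Kᵀ * R * K + (K - Kk)ᵀ * R * (K - Kk)
          - (Kprev - Kk)ᵀ * R * (Kprev - Kk) := by
  intro K
  have hRsymm : Rᵀ = R := hR.1
  have hPsymm : Pkᵀ = Pk := hPk.1
  have hRinv : R * R⁻¹ = 1 :=
    Matrix.mul_nonsing_inv R (isUnit_iff_ne_zero.mpr hR.det_pos.ne')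
  have hRK : R * Kk = Bᵀ * Pk := by
    rw [hKk, Matrix.mul_assoc, ← Matrix.mul_assoc R, hRinv, Matrix.one_mul]
  have hKR : Kkᵀ * R = Pk * B := by
    have h := congrArg Matrix.transpose hRK
    simpa [Matrix.transpose_mul, hRsymm, hPsymm] using h
  have e1 : ∀ X : Matrix (Fin m) (Fin n) ℝ, Kkᵀ * (R * X) = Pk * (B * X) := by
    intro X
    rw [← Matrix.mul_assoc, hKR, Matrix.mul_assoc]
  have hA : Pk * A + Aᵀ * Pk =
      Pk * (B * Kprev) + Kprevᵀ * (Bᵀ * Pk) - Qt - Kprevᵀ * (R * Kprev) := by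
    have h := hlyap
    simp only [Matrix.transpose_sub, Matrix.transpose_mul, Matrix.mul_sub,
      Matrix.sub_mul, Matrix.mul_assoc] at h
    linear_combination (norm := abel) h
  simp only [Matrix.transpose_sub, Matrix.transpose_mul, hRsymm, hPsymm,
    Matrix.mul_sub, Matrix.sub_mul, Matrix.mul_assoc, hRK, e1]
  linear_combination (norm := abel) hA
end

section
/- (Kleinman iteration monotonicity, one step) Let A − BK_{k−1} be Hurwitz, P_k ≻ 0 solve P_k(A−BK_{k−1}) + (A−BK_{k−1})ᵀP_k + Q̃ + K_{k−1}ᵀRK_{k−1} = 0, and K_k = R⁻¹BᵀP_k. If A − BK_k is Hurwitz and P_{k+1} solves the analogous Lyapunov equation for K_k, then P_{k+1} ⪯ P_k. -/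
/-!
Write `Δ = P_k - P_{k+1}` and `A_k = A - B K_k`. Subtracting the two Lyapunov equations and
using `R K_k = Bᵀ P_k` gives `Δ A_k + A_kᵀ Δ = -(K_k - K_{k-1})ᵀ R (K_k - K_{k-1}) ⪯ 0`.
Since `A_k` is Hurwitz, this forces `Δ ⪰ 0`: along `u t = exp (t A_k) x` the quantity
`uᵀ Δ u` is nonincreasing and tends to `0`, because on a generalized eigenspace for `μ` the
vector `exp (t A_k) x` is `exp (t μ)` times a polynomial in `t`.
-/

open Matrix Filter Topology NormedSpace
open scoped Nat

section
variable {𝕜 ι m : Type*} [NontriviallyNormedField 𝕜] [Fintype ι]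
  {f g : 𝕜 → ι → 𝕜} {f' g' : ι → 𝕜} {t : 𝕜}

lemma HasDerivAt.dotProduct (hf : HasDerivAt f f' t) (hg : HasDerivAt g g' t) :
    HasDerivAt (fun s => f s ⬝ᵥ g s) (f' ⬝ᵥ g t + f t ⬝ᵥ g') t := by
  simp only [_root_.dotProduct, ← Finset.sum_add_distrib]
  exact HasDerivAt.fun_sum fun i _ => (hasDerivAt_pi.1 hf i).mul (hasDerivAt_pi.1 hg i)

lemma HasDerivAt.matrix_mulVec [CompleteSpace 𝕜] [Fintype m] (M : Matrix m ι 𝕜)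
    (hf : HasDerivAt f f' t) :
    HasDerivAt (fun s => M *ᵥ f s) (M *ᵥ f') t :=
  (M.mulVecLin.toContinuousLinearMap.hasFDerivAt (x := f t)).comp_hasDerivAt t hf

end

section MatrixExp
variable {ι : Type*} [Fintype ι] [DecidableEq ι]
attribute [local instance] Matrix.linftyOpNormedRing Matrix.linftyOpNormedAlgebra

lemma Matrix.exp_smul_mulVec_of_pow_mulVec_eq_zero {A : Matrix ι ι ℂ} {μ : ℂ} {k : ℕ}
    {v : ι → ℂ} (hv : (A - μ • 1) ^ k *ᵥ v = 0) (s : ℂ) :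
    exp (s • A) *ᵥ v = ∑ j ∈ Finset.range k,
      (Complex.exp (s * μ) * s ^ j / j !) • ((A - μ • 1) ^ j *ᵥ v) := by
  set N := A - μ • (1 : Matrix ι ι ℂ)
  have hsplit : s • A = algebraMap ℂ _ (s * μ) + s • N := by
    simp [N, Algebra.algebraMap_eq_smul_one, smul_sub, smul_smul]
  have hNv (j : ℕ) (hj : k ≤ j) : N ^ j *ᵥ v = 0 := by
    rw [← Nat.sub_add_cancel hj, pow_add, ← mulVec_mulVec, hv, mulVec_zero]
  have hexpN : exp (s • N) *ᵥ v = ∑ j ∈ Finset.range k, (s ^ j / j !) • (N ^ j *ᵥ v) := by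
    let L := ((mulVecBilin ℂ ℂ).flip v : Matrix ι ι ℂ →ₗ[ℂ] ι → ℂ).toContinuousLinearMap
    have hterm (j : ℕ) : L ((j !⁻¹ : ℂ) • (s • N) ^ j) = (s ^ j / j !) • (N ^ j *ᵥ v) := by
      simp [L, smul_pow, smul_smul, div_eq_inv_mul]
    rw [exp_eq_tsum ℂ]
    change L _ = _
    rw [L.map_tsum (expSeries_summable' _), tsum_eq_sum (s := Finset.range k)]
    · exact Finset.sum_congr rfl fun j _ => hterm j
    · intro j hj
      rw [hterm, hNv j (by simpa using hj), smul_zero]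
  have hscalar : exp (algebraMap ℂ (Matrix ι ι ℂ) (s * μ)) = Complex.exp (s * μ) • 1 := by
    rw [algebraMap_eq_diagonal, Pi.algebraMap_def, exp_diagonal, smul_one_eq_diagonal]
    simp [Pi.exp_def, Complex.exp_eq_exp_ℂ]
  rw [hsplit, exp_add_of_commute _ _ (Algebra.commute_algebraMap_left _ _), hscalar,
    smul_mul_assoc, one_mul, smul_mulVec, hexpN, Finset.smul_sum]
  simp only [smul_smul, mul_div_assoc]

lemma Complex.tendsto_exp_mul_mul_pow_atTop {μ : ℂ} (hμ : μ.re < 0) (j : ℕ) :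
    Tendsto (fun t : ℝ => Complex.exp (t * μ) * (t : ℂ) ^ j) atTop (𝓝 0) := by
  rw [tendsto_zero_iff_norm_tendsto_zero]
  refine (tendsto_rpow_mul_exp_neg_mul_atTop_nhds_zero j (-μ.re) (by linarith)).congr' ?_
  filter_upwards [eventually_ge_atTop 0] with t ht
  rw [norm_mul, Complex.norm_exp, norm_pow, Complex.norm_real, Real.norm_of_nonneg ht,
    Real.rpow_natCast, mul_comm]
  simp [mul_comm]

lemma Matrix.tendsto_exp_smul_mulVec_atTop {A : Matrix ι ι ℂ}
    (hA : ∀ μ ∈ spectrum ℂ A, μ.re < 0) (x : ι → ℂ) :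
    Tendsto (fun t : ℝ => exp ((t : ℂ) • A) *ᵥ x) atTop (𝓝 0) := by
  have hx : x ∈ ⨆ μ, Module.End.maxGenEigenspace (toLinAlgEquiv' A) μ := by
    rw [Module.End.iSup_maxGenEigenspace_eq_top]; trivial
  refine Submodule.iSup_induction (motive := fun y =>
      Tendsto (fun t : ℝ => exp ((t : ℂ) • A) *ᵥ y) atTop (𝓝 0)) _ hx
    (fun μ v hv => ?_) (by simp) fun v w hv hw => by simpa [mulVec_add] using hv.add hw
  obtain rfl | hv0 := eq_or_ne v 0
  · simp
  obtain ⟨k, hk⟩ := (Module.End.mem_maxGenEigenspace _ _ _).1 hv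
  have hkv : (A - μ • 1) ^ k *ᵥ v = 0 := by
    rwa [← map_one (toLinAlgEquiv' (R := ℂ) (n := ι)), ← map_smul, ← map_sub, ← map_pow,
      toLinAlgEquiv'_apply] at hk
  have hμ : μ ∈ spectrum ℂ A := by
    rw [← AlgEquiv.spectrum_eq toLinAlgEquiv', ← Module.End.hasEigenvalue_iff_mem_spectrum]
    refine Module.End.hasEigenvalue_of_hasGenEigenvalue (k := k) ?_
    exact (Submodule.ne_bot_iff _).2 ⟨v, Module.End.mem_genEigenspace_nat.2 hk, hv0⟩
  simp_rw [exp_smul_mulVec_of_pow_mulVec_eq_zero hkv]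
  rw [← Finset.sum_const_zero (s := Finset.range k)]
  refine tendsto_finsetSum _ fun j _ => ?_
  simpa [div_eq_mul_inv, mul_assoc] using
    ((Complex.tendsto_exp_mul_mul_pow_atTop (hA μ hμ) j).mul_const (j ! : ℂ)⁻¹).smul_const
      ((A - μ • 1) ^ j *ᵥ v)

lemma Matrix.map_ofReal_exp_smul (A : Matrix ι ι ℝ) (t : ℝ) :
    (exp (t • A)).map Complex.ofReal = exp ((t : ℂ) • A.map Complex.ofReal) := by
  have h := map_exp (Complex.ofRealHom.mapMatrix : Matrix ι ι ℝ →+* Matrix ι ι ℂ)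
    (continuous_id.matrix_map Complex.continuous_ofReal) (t • A)
  have hsmul : Complex.ofRealHom.mapMatrix (t • A) = (t : ℂ) • A.map Complex.ofReal := by
    ext; simp
  exact hsmul ▸ h

lemma Matrix.tendsto_exp_smul_mulVec_atTop_of_map_ofReal {A : Matrix ι ι ℝ}
    (hA : ∀ μ ∈ spectrum ℂ (A.map Complex.ofReal), μ.re < 0) (x : ι → ℝ) :
    Tendsto (fun t : ℝ => exp (t • A) *ᵥ x) atTop (𝓝 0) := by
  have hre : Continuous fun y : ι → ℂ => fun i => (y i).re := by fun_prop
  have h := (hre.tendsto 0).comp (tendsto_exp_smul_mulVec_atTop hA (Complex.ofReal ∘ x))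
  refine h.congr fun t => funext fun i => ?_
  show ((exp ((t : ℂ) • A.map Complex.ofReal) *ᵥ (Complex.ofReal ∘ x)) i).re = _
  rw [← map_ofReal_exp_smul]
  exact (congrArg Complex.re (RingHom.map_mulVec Complex.ofRealHom _ x i).symm).trans
    (Complex.ofReal_re _)

theorem Matrix.PosSemidef.of_lyapunov {A P M : Matrix ι ι ℝ}
    (hA : ∀ μ ∈ spectrum ℂ (A.map Complex.ofReal), μ.re < 0)
    (hP : P.IsSymm) (hM : M.PosSemidef) (hPAM : P * A + Aᵀ * P = -M) : P.PosSemidef := by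
  refine posSemidef_iff_dotProduct_mulVec.2 ⟨hP, fun x => ?_⟩
  set u : ℝ → ι → ℝ := fun t => exp (t • A) *ᵥ x
  set g : ℝ → ℝ := fun t => u t ⬝ᵥ P *ᵥ u t
  have hu (t : ℝ) : HasDerivAt u (A *ᵥ u t) t := by
    have := (((mulVecBilin ℝ ℝ).flip x : Matrix ι ι ℝ →ₗ[ℝ] ι → ℝ).toContinuousLinearMap
      |>.hasFDerivAt (x := exp (t • A))).comp_hasDerivAt t (hasDerivAt_exp_smul_const' A t)
    exact this.congr_deriv (mulVec_mulVec _ _ _).symm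
  have hg (t : ℝ) : HasDerivAt g (-(u t ⬝ᵥ M *ᵥ u t)) t := by
    refine ((hu t).dotProduct ((hu t).matrix_mulVec P)).congr_deriv ?_
    rw [← dotProduct_neg, ← neg_mulVec, ← hPAM, add_mulVec, dotProduct_add, ← mulVec_mulVec,
      ← mulVec_mulVec, dotProduct_mulVec (u t) Aᵀ, vecMul_transpose, add_comm]
  have hanti : Antitone g := antitone_of_hasDerivAt_nonpos hg fun t =>
    neg_nonpos.2 (by simpa using hM.dotProduct_mulVec_nonneg (u t))
  have hlim : Tendsto g atTop (𝓝 0) := by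
    have hq : Continuous fun y : ι → ℝ => y ⬝ᵥ P *ᵥ y := by fun_prop
    simpa [g, u, Function.comp_def] using
      (hq.tendsto 0).comp (tendsto_exp_smul_mulVec_atTop_of_map_ofReal hA x)
  simpa [g, u] using le_of_tendsto hlim (eventually_atTop.2 ⟨0, fun t ht => hanti ht⟩)

end MatrixExp

lemma Matrix.lyapunov_sub_of_kleinman_gain {𝕜 ι κ : Type*} [CommRing 𝕜] [Fintype ι]
    [Fintype κ]
    {A P P' Q : Matrix ι ι 𝕜} {B : Matrix ι κ 𝕜} {R : Matrix κ κ 𝕜} {K K' : Matrix κ ι 𝕜}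
    (hR : Rᵀ = R) (hP : Pᵀ = P) (hK' : R * K' = Bᵀ * P)
    (h : P * (A - B * K) + (A - B * K)ᵀ * P + Q + Kᵀ * R * K = 0)
    (h' : P' * (A - B * K') + (A - B * K')ᵀ * P' + Q + K'ᵀ * R * K' = 0) :
    (P - P') * (A - B * K') + (A - B * K')ᵀ * (P - P') = -((K' - K)ᵀ * R * (K' - K)) := by
  have hPB : P * B = K'ᵀ * R := by simpa [hR, hP] using congrArg transpose hK'.symm
  calc (P - P') * (A - B * K') + (A - B * K')ᵀ * (P - P')
      = (P * (A - B * K) + (A - B * K)ᵀ * P + Q + Kᵀ * R * K)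
        - (P' * (A - B * K') + (A - B * K')ᵀ * P' + Q + K'ᵀ * R * K')
        + P * B * (K - K') + (K - K')ᵀ * (Bᵀ * P) - Kᵀ * R * K + K'ᵀ * R * K' := by
        simp only [transpose_sub, transpose_mul, Matrix.mul_sub, Matrix.sub_mul, Matrix.mul_assoc]
        abel
    _ = K'ᵀ * R * (K - K') + (K - K')ᵀ * (R * K') - Kᵀ * R * K + K'ᵀ * R * K' := by
        rw [h, h', hPB, hK', sub_zero, zero_add]
    _ = -((K' - K)ᵀ * R * (K' - K)) := by
        simp only [transpose_sub, Matrix.mul_sub, Matrix.sub_mul, Matrix.mul_assoc]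
        abel

theorem stmt_9_general {n m : ℕ}
    (A : Matrix (Fin n) (Fin n) ℝ) (B : Matrix (Fin n) (Fin m) ℝ)
    (Qt : Matrix (Fin n) (Fin n) ℝ) (R : Matrix (Fin m) (Fin m) ℝ)
    (hR : R.PosDef)
    (Kprev : Matrix (Fin m) (Fin n) ℝ)
    (Pk : Matrix (Fin n) (Fin n) ℝ) (hPk : Pk.PosDef)
    (hlyapk : Pk * (A - B * Kprev) + (A - B * Kprev)ᵀ * Pk + Qt + Kprevᵀ * R * Kprev = 0)
    (Kk : Matrix (Fin m) (Fin n) ℝ) (hKk : Kk = R⁻¹ * Bᵀ * Pk)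
    (hKkHur : ∀ μ ∈ spectrum ℂ ((A - B * Kk).map Complex.ofReal), μ.re < 0)
    (Pk1 : Matrix (Fin n) (Fin n) ℝ) (hPk1 : Pk1.IsSymm)
    (hlyapk1 : Pk1 * (A - B * Kk) + (A - B * Kk)ᵀ * Pk1 + Qt + Kkᵀ * R * Kk = 0) :
    (Pk - Pk1).PosSemidef := by
  have hRsymm : R.IsSymm := isHermitian_iff_isSymm.1 hR.isHermitian
  have hPksymm : Pk.IsSymm := isHermitian_iff_isSymm.1 hPk.isHermitian
  have hgain : R * Kk = Bᵀ * Pk := by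
    rw [hKk, Matrix.mul_assoc]
    exact mul_nonsing_inv_cancel_left _ _ ((isUnit_iff_isUnit_det R).1 hR.isUnit)
  have hgap : ((Kk - Kprev)ᵀ * R * (Kk - Kprev)).PosSemidef := by
    simpa using hR.posSemidef.conjTranspose_mul_mul_same (Kk - Kprev)
  exact .of_lyapunov hKkHur (hPksymm.sub hPk1) hgap
    (lyapunov_sub_of_kleinman_gain hRsymm hPksymm hgain hlyapk hlyapk1)

/-- One-step monotonicity of the Kleinman policy iteration: `P_{k+1} ⪯ P_k`. -/
theorem stmt_9 {n m : ℕ}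
    (A : Matrix (Fin n) (Fin n) ℝ) (B : Matrix (Fin n) (Fin m) ℝ)
    (Qt : Matrix (Fin n) (Fin n) ℝ) (R : Matrix (Fin m) (Fin m) ℝ)
    (hQt : Qt.PosSemidef) (hR : R.PosDef)
    (Kprev : Matrix (Fin m) (Fin n) ℝ)
    (hKprev : ∀ μ ∈ spectrum ℂ ((A - B * Kprev).map Complex.ofReal), μ.re < 0)
    (Pk : Matrix (Fin n) (Fin n) ℝ) (hPk : Pk.PosDef)
    (hlyapk : Pk * (A - B * Kprev) + (A - B * Kprev)ᵀ * Pk + Qt + Kprevᵀ * R * Kprev = 0)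
    (Kk : Matrix (Fin m) (Fin n) ℝ) (hKk : Kk = R⁻¹ * Bᵀ * Pk)
    (hKkHur : ∀ μ ∈ spectrum ℂ ((A - B * Kk).map Complex.ofReal), μ.re < 0)
    (Pk1 : Matrix (Fin n) (Fin n) ℝ) (hPk1 : Pk1.IsSymm)
    (hlyapk1 : Pk1 * (A - B * Kk) + (A - B * Kk)ᵀ * Pk1 + Qt + Kkᵀ * R * Kk = 0) :
    (Pk - Pk1).PosSemidef :=
  stmt_9_general A B Qt R hR Kprev Pk hPk hlyapk Kk hKk hKkHur Pk1 hPk1 hlyapk1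
end
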